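/- Let G(x) be an m×m symmetric matrix polynomial on ℝⁿ that is matrix sos-concave, let Λ be a positive semidefinite symmetric m×m matrix, let a ∈ ℝⁿ, b ∈ ℝ, and define the polynomial f(x) = aᵀx − Λ • G(x) − b. If there exists u ∈ ℝⁿ with f(u) = 0 and ∇f(u) = 0, then f is a sum of squares of polynomials. -/

import Mathlib

open Matrix MvPolynomial

/-- The Hessian matrix of a scalar function on `ℝⁿ`. -/
noncomputable def hess {n : ℕ} (f : (Fin n → ℝ) → ℝ) (x : Fin n → ℝ) :
    Matrix (Fin n) (Fin n) ℝ :=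
  Matrix.of fun i j => fderiv ℝ (fun y => fderiv ℝ f y (Pi.single j 1)) x (Pi.single i 1)

/-!
Write `Λ = BᵀB`. Then `Λ • G(x) = ∑ₛ Bₛᵀ G(x) Bₛ`, so by matrix sos-concavity the Hessian of `f`
is a Gram matrix `∑ₖ Fₖ(x) Fₖ(x)ᵀ` of polynomial vectors. As `f(u) = 0` and `∇f(u) = 0`,
Taylor's formula with integral remainder gives
`f(x) = ∫₀¹ (1 - t) ∑ₖ ⟨Fₖ(u + t (x - u)), x - u⟩² dt`.
Each integrand is `σ(t)²` for a polynomial `σ` in `t` with coefficients polynomial in `x`, and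
`σ ↦ ∫₀¹ (1 - t) σ(t)² dt` is the quadratic form of the positive semidefinite Hankel matrix
`(1 / ((k + l + 1) (k + l + 2)))ₖₗ` in the coefficients of `σ`; factoring that matrix writes the
integral as a sum of squares of linear combinations of the coefficients. The integral is taken
coefficientwise, so it never leaves the polynomial ring in `x`.
-/

theorem IsSumSq.exists_fin_sum_sq {R : Type*} [Semiring R] {p : R} (h : IsSumSq p) :
    ∃ (k : ℕ) (q : Fin k → R), p = ∑ i, q i ^ 2 := by
  induction h with
  | zero => exact ⟨0, ![], by simp⟩
  | sq_add a _ ih =>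
    obtain ⟨k, q, rfl⟩ := ih
    exact ⟨k + 1, Fin.cons a q, by simp [Fin.sum_univ_succ, sq]⟩

theorem Matrix.trace_transpose_mul_self_mul {ι κ R : Type*} [Fintype ι] [Fintype κ]
    [CommSemiring R] (B : Matrix κ ι R) (M : Matrix ι ι R) :
    trace (Bᵀ * B * M) = ∑ s, B s ⬝ᵥ M *ᵥ B s := by
  rw [Matrix.mul_assoc, trace_mul_comm]
  simp only [trace, diag, mul_apply, transpose_apply, dotProduct, mulVec, Finset.sum_mul,
    Finset.mul_sum]
  refine Finset.sum_congr rfl fun s _ => ?_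
  rw [Finset.sum_comm]
  exact Finset.sum_congr rfl fun i _ => Finset.sum_congr rfl fun j _ => by ring

open scoped MatrixOrder in
theorem Matrix.PosSemidef.exists_eq_transpose_mul_self {ι : Type*} [Fintype ι] [DecidableEq ι]
    {A : Matrix ι ι ℝ} (hA : A.PosSemidef) : ∃ B : Matrix ι ι ℝ, A = Bᵀ * B :=
  CStarAlgebra.nonneg_iff_eq_star_mul_self.mp hA.nonneg

namespace Polynomial

variable {R : Type*} [CommRing R] [Algebra ℝ R]

noncomputable def momentWeight (m : ℕ) : ℝ := ((m + 1) * (m + 2))⁻¹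

theorem integral_one_sub_mul_pow (m : ℕ) :
    ∫ t in (0 : ℝ)..1, (1 - t) * t ^ m = momentWeight m := by
  have hsplit : ∀ t : ℝ, (1 - t) * t ^ m = t ^ m - t ^ (m + 1) := fun t => by ring
  simp only [hsplit, intervalIntegral.integral_sub (intervalIntegral.intervalIntegrable_pow m)
    (intervalIntegral.intervalIntegrable_pow (m + 1)), integral_pow, momentWeight]
  field_simp
  push_cast
  ring

/-- The Taylor remainder functional `h ↦ ∫₀¹ (1 - t) h(t) dt`, defined coefficientwise so that
it makes sense over any `ℝ`-algebra. -/
noncomputable def remainderIntegral : R[X] →ₗ[ℝ] R :=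
  lsum fun m => momentWeight m • LinearMap.id

theorem remainderIntegral_monomial (m : ℕ) (a : R) :
    remainderIntegral (monomial m a) = momentWeight m • a := by
  simp [remainderIntegral]

theorem remainderIntegral_derivative_derivative (h : R[X]) :
    remainderIntegral (derivative (derivative h))
      = h.eval 1 - h.eval 0 - (derivative h).eval 0 := by
  induction h using Polynomial.induction_on' with
  | add p q hp hq => simp only [map_add, hp, hq, eval_add]; ring
  | monomial m a =>
    rcases m with _ | _ | k
    · simp
    · simp
    · have hcoeff :
          a * ((k : R) + 1 + 1) * ((k : R) + 1) = (((k : ℝ) + 1) * ((k : ℝ) + 2)) • a := by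
        simp only [Algebra.smul_def, map_mul, map_add, map_natCast, map_one, map_ofNat]; ring
      have hweight : ((k : ℝ) + 1) * ((k : ℝ) + 2) * momentWeight k = 1 := by
        rw [momentWeight]; field_simp
      simp [hcoeff, remainderIntegral_monomial, smul_smul, hweight]

theorem remainderIntegral_eq_integral (h : ℝ[X]) :
    remainderIntegral h = ∫ t in (0 : ℝ)..1, (1 - t) * h.eval t := by
  induction h using Polynomial.induction_on' with
  | add p q hp hq =>
    simp only [map_add, hp, hq, eval_add, mul_add]
    rw [intervalIntegral.integral_add] <;> exact (by fun_prop : Continuous _).intervalIntegrable _ _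
  | monomial m a =>
    rw [remainderIntegral_monomial, smul_eq_mul, ← integral_one_sub_mul_pow,
      ← intervalIntegral.integral_mul_const]
    simp only [eval_monomial]
    congr 1
    funext t
    ring

theorem remainderIntegral_sq_sum_monomial {N : ℕ} (c : Fin N → R) :
    remainderIntegral ((∑ k : Fin N, monomial k (c k)) ^ 2)
      = ∑ k : Fin N, ∑ l : Fin N, momentWeight (k + l) • (c k * c l) := by
  simp only [sq, Finset.sum_mul_sum, monomial_mul_monomial, map_sum, remainderIntegral_monomial]

theorem posSemidef_momentWeight (N : ℕ) :
    (Matrix.of fun k l : Fin N => momentWeight (k + l)).PosSemidef := by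
  refine .of_dotProduct_mulVec_nonneg ?_ fun y => ?_
  · ext k l
    simp [add_comm]
  · have hform : star y ⬝ᵥ (Matrix.of fun k l : Fin N => momentWeight (k + l)) *ᵥ y
        = remainderIntegral ((∑ k : Fin N, monomial k (y k)) ^ 2) := by
      simp only [remainderIntegral_sq_sum_monomial, dotProduct, mulVec, of_apply, Finset.mul_sum]
      refine Finset.sum_congr rfl fun k _ => Finset.sum_congr rfl fun l _ => ?_
      simp only [Pi.star_apply, star_trivial, smul_eq_mul]
      ring
    rw [hform, remainderIntegral_eq_integral]
    exact intervalIntegral.integral_nonneg zero_le_one fun t ht =>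
      mul_nonneg (by linarith [ht.2]) (by rw [eval_pow]; positivity)

theorem isSumSq_remainderIntegral_sq (σ : R[X]) : IsSumSq (remainderIntegral (σ ^ 2)) := by
  set N := σ.natDegree + 1
  obtain ⟨B, hB⟩ := (posSemidef_momentWeight N).exists_eq_transpose_mul_self
  have hweight (k l : Fin N) : momentWeight (k + l) = ∑ r, B r k * B r l := by
    simpa [Matrix.mul_apply] using congrFun (congrFun hB k) l
  have hσ : σ = ∑ k : Fin N, monomial k (σ.coeff k) :=
    (σ.as_sum_range' N (Nat.lt_succ_self _)).trans (Finset.sum_range _)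
  have hsum : remainderIntegral (σ ^ 2) = ∑ r, (∑ k : Fin N, B r k • σ.coeff k) ^ 2 := by
    conv_lhs => rw [hσ, remainderIntegral_sq_sum_monomial]
    simp only [hweight, sq, Finset.sum_mul_sum, Finset.sum_smul, smul_mul_smul_comm]
    conv_rhs => rw [Finset.sum_comm]
    exact Finset.sum_congr rfl fun k _ => Finset.sum_comm
  rw [hsum]
  exact IsSumSq.sum_sq _ _

end Polynomial

namespace MvPolynomial

variable {σ K : Type*} [CommRing K]

/-- `p ↦ (t ↦ p (u + t • (x - u)))`: the restriction of `p` to the line through `u` and the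
generic point `x`, as a polynomial in `t` whose coefficients are polynomials in `x`. -/
noncomputable def restrictLine (u : σ → K) :
    MvPolynomial σ K →ₐ[K] Polynomial (MvPolynomial σ K) :=
  aeval fun i => Polynomial.C (X i - C (u i)) * Polynomial.X + Polynomial.C (C (u i))

@[simp]
theorem restrictLine_X (u : σ → K) (i : σ) :
    restrictLine u (X i) = Polynomial.C (X i - C (u i)) * Polynomial.X + Polynomial.C (C (u i)) :=
  aeval_X _ _

@[simp]
theorem restrictLine_C (u : σ → K) (a : K) : restrictLine u (C a) = Polynomial.C (C a) :=
  aeval_C _ _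

theorem eval_one_restrictLine (u : σ → K) (p : MvPolynomial σ K) :
    (restrictLine u p).eval 1 = p := by
  induction p using MvPolynomial.induction_on with
  | C a => simp
  | add p q hp hq => simp [hp, hq]
  | mul_X p i hp => simp [hp]

theorem eval_zero_restrictLine (u : σ → K) (p : MvPolynomial σ K) :
    (restrictLine u p).eval 0 = C (eval u p) := by
  induction p using MvPolynomial.induction_on with
  | C a => simp
  | add p q hp hq => simp [hp, hq]
  | mul_X p i hp => simp [hp]

theorem derivative_restrictLine [Fintype σ] (u : σ → K) (p : MvPolynomial σ K) :
    Polynomial.derivative (restrictLine u p)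
      = ∑ i, Polynomial.C (X i - C (u i)) * restrictLine u (pderiv i p) := by
  classical
  induction p using MvPolynomial.induction_on with
  | C a => simp
  | add p q hp hq => simp only [map_add, hp, hq, mul_add, Finset.sum_add_distrib]
  | mul_X p j hp =>
    have hsingle : ∑ i, Polynomial.C (X i - C (u i))
          * (restrictLine u p * restrictLine u (pderiv i (X j)))
        = Polynomial.C (X j - C (u j)) * restrictLine u p := by
      rw [Finset.sum_eq_single j (fun i _ hij => by simp [pderiv_X_of_ne (Ne.symm hij)])
        (by simp), pderiv_X_self, map_one, mul_one]
    simp only [pderiv_mul, map_add, map_mul, mul_add, Finset.sum_add_distrib, hsingle,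
      Polynomial.derivative_mul, hp]
    congr 1
    · simp only [Finset.sum_mul, mul_assoc]
    · simp [mul_comm]

theorem derivative_derivative_restrictLine [Fintype σ] {ι : Type*} [Fintype ι] (u : σ → K)
    {p : MvPolynomial σ K} (F : ι → σ → MvPolynomial σ K)
    (hF : ∀ i j, pderiv i (pderiv j p) = ∑ k, F k i * F k j) :
    Polynomial.derivative (Polynomial.derivative (restrictLine u p))
      = ∑ k, (∑ i, Polynomial.C (X i - C (u i)) * restrictLine u (F k i)) ^ 2 := by
  simp only [derivative_restrictLine, map_sum, Polynomial.derivative_C_mul, hF, map_mul, sq,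
    Finset.mul_sum, Finset.sum_mul]
  conv_rhs => rw [Finset.sum_comm]
  refine Finset.sum_congr rfl fun j _ => ?_
  rw [Finset.sum_comm]
  refine Finset.sum_congr rfl fun k _ => Finset.sum_congr rfl fun i _ => ?_
  ring

section Taylor

variable {σ : Type*} [Fintype σ]

theorem remainderIntegral_derivative_derivative_restrictLine (u : σ → ℝ) {p : MvPolynomial σ ℝ}
    (h0 : eval u p = 0) (h1 : ∀ i, eval u (pderiv i p) = 0) :
    Polynomial.remainderIntegral
      (Polynomial.derivative (Polynomial.derivative (restrictLine u p))) = p := by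
  rw [Polynomial.remainderIntegral_derivative_derivative, eval_one_restrictLine,
    eval_zero_restrictLine, derivative_restrictLine, Polynomial.eval_finsetSum]
  simp [eval_zero_restrictLine, h0, h1]

theorem isSumSq_of_pderiv_pderiv_eq_gram {ι : Type*} [Fintype ι] (u : σ → ℝ)
    {p : MvPolynomial σ ℝ} (h0 : eval u p = 0) (h1 : ∀ i, eval u (pderiv i p) = 0)
    (F : ι → σ → MvPolynomial σ ℝ) (hF : ∀ i j, pderiv i (pderiv j p) = ∑ k, F k i * F k j) :
    IsSumSq p := by
  rw [← remainderIntegral_derivative_derivative_restrictLine u h0 h1,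
    derivative_derivative_restrictLine u F hF, map_sum]
  exact IsSumSq.sum fun k _ => Polynomial.isSumSq_remainderIntegral_sq _

end Taylor

section Calculus

variable {σ : Type*} [Fintype σ]

theorem hasFDerivAt_eval (p : MvPolynomial σ ℝ) (x : σ → ℝ) :
    HasFDerivAt (fun y => eval y p)
      (∑ i, eval x (pderiv i p) • (ContinuousLinearMap.proj i : (σ → ℝ) →L[ℝ] ℝ)) x := by
  classical
  induction p using MvPolynomial.induction_on with
  | C a => simpa using hasFDerivAt_const a x
  | add p q hp hq =>
    simp only [eval_add]
    refine (hp.add hq).congr_fderiv ?_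
    simp [Finset.sum_add_distrib, add_smul]
  | mul_X p j hp =>
    simp only [eval_mul, eval_X]
    refine (hp.mul (hasFDerivAt_apply j x)).congr_fderiv ?_
    ext v
    simp [Pi.single_apply, Finset.sum_add_distrib, add_mul, apply_ite, Finset.mul_sum, mul_assoc]

theorem fderiv_eval_apply_single [DecidableEq σ] (p : MvPolynomial σ ℝ) (x : σ → ℝ) (i : σ) :
    fderiv ℝ (fun y => eval y p) x (Pi.single i 1) = eval x (pderiv i p) := by
  simp [(hasFDerivAt_eval p x).fderiv, Pi.single_apply]

theorem hess_eval {n : ℕ} (p : MvPolynomial (Fin n) ℝ) (x : Fin n → ℝ) (i j : Fin n) :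
    hess (fun y => eval y p) x i j = eval x (pderiv i (pderiv j p)) := by
  simp only [hess, of_apply, fderiv_eval_apply_single]

end Calculus

theorem eval_dotProduct_mulVec {σ ι R : Type*} [Fintype ι] [CommRing R]
    (M : Matrix ι ι (MvPolynomial σ R)) (ξ : ι → R) (x : σ → R) :
    eval x ((C ∘ ξ) ⬝ᵥ M *ᵥ (C ∘ ξ)) = ξ ⬝ᵥ M.map (eval x) *ᵥ ξ := by
  rw [RingHom.map_dotProduct]
  congr 1
  · ext i; simp
  · ext i; rw [Function.comp_apply, RingHom.map_mulVec]; congr; ext j; simp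

theorem pderiv_pderiv_neg_eq_of_neg_hess_eq {n k : ℕ} {p : MvPolynomial (Fin n) ℝ}
    (F : Matrix (Fin k) (Fin n) (MvPolynomial (Fin n) ℝ))
    (hF : ∀ x, -hess (fun y => eval y p) x = (F.map (eval x))ᵀ * F.map (eval x)) (i j : Fin n) :
    pderiv i (pderiv j (-p)) = ∑ r, F r i * F r j := by
  refine MvPolynomial.funext fun x => ?_
  have := congrFun (congrFun (hF x) i) j
  simp only [Matrix.neg_apply, hess_eval, mul_apply, transpose_apply, map_apply] at this
  simp [this]

end MvPolynomial

theorem stmt13_general (n m : ℕ)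
    (Gp : Matrix (Fin m) (Fin m) (MvPolynomial (Fin n) ℝ))
    (G : (Fin n → ℝ) → Matrix (Fin m) (Fin m) ℝ)
    (hG : ∀ x, G x = Matrix.of fun i j => eval x (Gp i j))
    (hsos : ∀ ξ : Fin m → ℝ, ∃ (k : ℕ) (F : Matrix (Fin k) (Fin n) (MvPolynomial (Fin n) ℝ)),
      ∀ x : Fin n → ℝ,
        -(hess (fun y => ξ ⬝ᵥ (G y).mulVec ξ) x)
          = (Matrix.of fun i j => eval x (F i j))ᵀ * (Matrix.of fun i j => eval x (F i j)))
    (Λ : Matrix (Fin m) (Fin m) ℝ) (hΛ : Λ.PosSemidef)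
    (a : Fin n → ℝ) (b : ℝ)
    (f : (Fin n → ℝ) → ℝ)
    (hf : ∀ x, f x = a ⬝ᵥ x - Matrix.trace (Λ * G x) - b)
    (u : Fin n → ℝ) (hfu : f u = 0) (hgrad : fderiv ℝ f u = 0) :
    ∃ (k : ℕ) (q : Fin k → MvPolynomial (Fin n) ℝ),
      ∀ x : Fin n → ℝ, f x = ∑ i, (eval x (q i)) ^ 2 := by
  obtain ⟨B, rfl⟩ := hΛ.exists_eq_transpose_mul_self
  obtain rfl : G = fun x => Gp.map (eval x) := funext hG
  simp only at hsos hf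
  set Q : Fin m → MvPolynomial (Fin n) ℝ := fun s => (C ∘ B s) ⬝ᵥ Gp *ᵥ (C ∘ B s)
  set P : MvPolynomial (Fin n) ℝ := (∑ i, C (a i) * X i - C b) - ∑ s, Q s
  have hfP : f = fun x => eval x P := funext fun x => by
    simp only [hf, P, Q, trace_transpose_mul_self_mul, map_sub, map_sum, map_mul, eval_C, eval_X,
      eval_dotProduct_mulVec]
    simp only [dotProduct]
    ring
  choose k F hF using fun s => hsos (B s)
  have hHessP (i j : Fin n) :
      pderiv i (pderiv j P) = ∑ r : Σ s, Fin (k s), F r.1 r.2 i * F r.1 r.2 j := by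
    have hQ (s : Fin m) := pderiv_pderiv_neg_eq_of_neg_hess_eq (p := Q s) (F s)
      (fun x => by simp only [Q, eval_dotProduct_mulVec]; exact hF s x) i j
    simp [P, Fintype.sum_sigma, ← hQ, pderiv_X, Pi.single_apply]
  have h0 : eval u P = 0 := (congrFun hfP u).symm.trans hfu
  have h1 (i : Fin n) : eval u (pderiv i P) = 0 := by
    rw [← fderiv_eval_apply_single, ← hfP, hgrad, _root_.zero_apply]
  obtain ⟨N, q, hq⟩ := (isSumSq_of_pderiv_pderiv_eq_gram u h0 h1 _ hHessP).exists_fin_sum_sq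
  exact ⟨N, q, fun x => by simp [hfP, hq]⟩

/-- if `G` is a matrix sos-concave symmetric matrix polynomial, `Λ ⪰ 0`
is symmetric, and `f(x) = aᵀx − Λ • G(x) − b` vanishes together with its gradient at
some point `u`, then `f` is a sum of squares of polynomials. -/
theorem stmt13 (n m : ℕ)
    (Gp : Matrix (Fin m) (Fin m) (MvPolynomial (Fin n) ℝ))
    (hGsym : ∀ i j, Gp i j = Gp j i)
    (G : (Fin n → ℝ) → Matrix (Fin m) (Fin m) ℝ)
    (hG : ∀ x, G x = Matrix.of fun i j => eval x (Gp i j))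
    (hsos : ∀ ξ : Fin m → ℝ, ∃ (k : ℕ) (F : Matrix (Fin k) (Fin n) (MvPolynomial (Fin n) ℝ)),
      ∀ x : Fin n → ℝ,
        -(hess (fun y => ξ ⬝ᵥ (G y).mulVec ξ) x)
          = (Matrix.of fun i j => eval x (F i j))ᵀ * (Matrix.of fun i j => eval x (F i j)))
    (Λ : Matrix (Fin m) (Fin m) ℝ) (hΛsym : Λ.IsSymm) (hΛ : Λ.PosSemidef)
    (a : Fin n → ℝ) (b : ℝ)
    (f : (Fin n → ℝ) → ℝ)
    (hf : ∀ x, f x = a ⬝ᵥ x - Matrix.trace (Λ * G x) - b)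
    (u : Fin n → ℝ) (hfu : f u = 0) (hgrad : fderiv ℝ f u = 0) :
    ∃ (k : ℕ) (q : Fin k → MvPolynomial (Fin n) ℝ),
      ∀ x : Fin n → ℝ, f x = ∑ i, (eval x (q i)) ^ 2 :=
  stmt13_general n m Gp G hG hsos Λ hΛ a b f hf u hfu hgrad
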